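/- arXiv:2511.01245 — 8 statements merged into one kernel-verified Lean document; each statement's English description precedes it below -/
import Mathlib

section
/- For all positive integers a, the central binomial coefficient satisfies (4^a / sqrt(pi*a)) * exp(-1/(8a)) < C(2a, a) < 4^a / sqrt(pi*a). -/
/-!
Put `q n = (C(2n, n) √(π n) / 4 ^ n) ^ 2`. Since `(n + 1) C(2n+2, n+1) = 2 (2n + 1) C(2n, n)`,
`q (n + 1) = (1 + t) q n` with `t = 1 / (4 n (n + 1))`, so `q` increases strictly, while
`q n e ^ (1 / (4 n))` decreases strictly because `1 + t < e ^ t`. Wallis' product gives `q n → 1`,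
so for `n ≥ 1` both sequences lie strictly on their side of `1`; taking square roots gives the bounds.
-/

open Filter Topology Real Nat

theorem StrictMono.lt_of_tendsto {α β : Type*} [TopologicalSpace α] [Preorder α]
    [OrderClosedTopology α] [PartialOrder β] [IsDirectedOrder β] [NoMaxOrder β] {f : β → α} {a : α}
    (hf : StrictMono f) (ha : Tendsto f atTop (𝓝 a)) (b : β) : f b < a := by
  obtain ⟨c, hbc⟩ := exists_gt b
  exact (hf hbc).trans_le (hf.monotone.ge_of_tendsto ha c)

theorem StrictAnti.lt_of_tendsto {α β : Type*} [TopologicalSpace α] [Preorder α]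
    [OrderClosedTopology α] [PartialOrder β] [IsDirectedOrder β] [NoMaxOrder β] {f : β → α} {a : α}
    (hf : StrictAnti f) (ha : Tendsto f atTop (𝓝 a)) (b : β) : a < f b :=
  StrictMono.lt_of_tendsto (α := αᵒᵈ) hf ha b

theorem Nat.centralBinom_sq_mul_wallis (n : ℕ) :
    (centralBinom n : ℝ) ^ 2 * (2 * n + 1) * Wallis.W n = 16 ^ n := by
  have hfac : ((2 * n)! : ℝ) = centralBinom n * n ! * n ! := by
    rw [two_mul, centralBinom_eq_two_mul_choose, two_mul]
    exact_mod_cast (add_choose_mul_factorial_mul_factorial n n).symm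
  have := centralBinom_ne_zero n
  rw [Wallis.W_eq_factorial_ratio, hfac, pow_mul]
  field_simp
  norm_num

/-- The square of `centralBinom n * √(π n) / 4 ^ n`. -/
noncomputable def centralBinomRatio (n : ℕ) : ℝ := (centralBinom n : ℝ) ^ 2 * π * n / 16 ^ n

theorem centralBinomRatio_eq_div_wallis (n : ℕ) :
    centralBinomRatio n = π * (n / (2 * n + 1)) / Wallis.W n := by
  have := centralBinom_ne_zero n
  have := (Wallis.W_pos n).ne'
  rw [centralBinomRatio, ← centralBinom_sq_mul_wallis]
  field_simp

theorem tendsto_centralBinomRatio : Tendsto centralBinomRatio atTop (𝓝 1) := by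
  have h := (Stirling.tendsto_self_div_two_mul_self_add_one.const_mul π).div
    Wallis.tendsto_W_nhds_pi_div_two (by positivity)
  rw [show π * (1 / 2) / (π / 2) = 1 by field_simp] at h
  exact h.congr fun n ↦ (centralBinomRatio_eq_div_wallis n).symm

theorem centralBinomRatio_pos {n : ℕ} (hn : n ≠ 0) : 0 < centralBinomRatio n := by
  unfold centralBinomRatio
  have := centralBinom_pos n
  positivity

theorem centralBinomRatio_succ {n : ℕ} (hn : n ≠ 0) :
    centralBinomRatio (n + 1) = (1 + 1 / (4 * n * (n + 1))) * centralBinomRatio n := by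
  have h : ((n : ℝ) + 1) * centralBinom (n + 1) = 2 * (2 * n + 1) * centralBinom n := by
    exact_mod_cast succ_mul_centralBinom_succ n
  have hn' : (n : ℝ) ≠ 0 := by exact_mod_cast hn
  have h' : (centralBinom (n + 1) : ℝ) = 2 * (2 * n + 1) * centralBinom n / (n + 1) := by
    rw [← h]; field_simp
  unfold centralBinomRatio
  rw [h']
  push_cast
  field_simp
  ring

theorem centralBinomRatio_lt_succ {n : ℕ} (hn : n ≠ 0) :
    centralBinomRatio n < centralBinomRatio (n + 1) := by
  rw [centralBinomRatio_succ hn, lt_mul_iff_one_lt_left (centralBinomRatio_pos hn)]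
  simp only [lt_add_iff_pos_right]
  positivity

theorem centralBinomRatio_mul_exp_succ_lt {n : ℕ} (hn : n ≠ 0) :
    centralBinomRatio (n + 1) * exp (1 / (4 * (n + 1 : ℕ))) <
      centralBinomRatio n * exp (1 / (4 * n)) := by
  set t : ℝ := 1 / (4 * n * (n + 1)) with ht_def
  have hn' : (n : ℝ) ≠ 0 := by exact_mod_cast hn
  have hsplit : exp (1 / (4 * n)) = exp (1 / (4 * (n + 1 : ℕ))) * exp t := by
    rw [← exp_add, ht_def]
    push_cast
    field_simp
  have ht : 1 + t < exp t := by
    rw [add_comm]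
    exact add_one_lt_exp (by positivity)
  rw [centralBinomRatio_succ hn, hsplit]
  have := centralBinomRatio_pos hn
  have := exp_pos (1 / (4 * (n + 1 : ℕ) : ℝ))
  calc (1 + t) * centralBinomRatio n * exp (1 / (4 * (n + 1 : ℕ)))
      < exp t * centralBinomRatio n * exp (1 / (4 * (n + 1 : ℕ))) := by gcongr
    _ = _ := by ring

theorem centralBinomRatio_lt_one {n : ℕ} (hn : n ≠ 0) : centralBinomRatio n < 1 := by
  obtain ⟨m, rfl⟩ := exists_eq_succ_of_ne_zero hn
  have hmono : StrictMono fun m ↦ centralBinomRatio (m + 1) :=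
    strictMono_nat_of_lt_succ fun m ↦ centralBinomRatio_lt_succ m.succ_ne_zero
  exact hmono.lt_of_tendsto ((tendsto_add_atTop_iff_nat 1).2 tendsto_centralBinomRatio) m

theorem one_lt_centralBinomRatio_mul_exp {n : ℕ} (hn : n ≠ 0) :
    1 < centralBinomRatio n * exp (1 / (4 * n)) := by
  obtain ⟨m, rfl⟩ := exists_eq_succ_of_ne_zero hn
  have hanti : StrictAnti fun m ↦ centralBinomRatio (m + 1) * exp (1 / (4 * (m + 1 : ℕ))) :=
    strictAnti_nat_of_succ_lt fun m ↦ centralBinomRatio_mul_exp_succ_lt m.succ_ne_zero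
  have hlim : Tendsto (fun n : ℕ ↦ centralBinomRatio n * exp (1 / (4 * n))) atTop (𝓝 1) := by
    have h := tendsto_centralBinomRatio.mul
      ((continuous_exp.tendsto 0).comp (tendsto_const_div_atTop_nhds_zero_nat (1 / 4)))
    simp only [mul_one, exp_zero] at h
    refine h.congr fun n ↦ ?_
    simp only [Function.comp_apply, div_div]
  exact hanti.lt_of_tendsto ((tendsto_add_atTop_iff_nat 1).2 hlim) m

theorem centralBinom_eq_mul_sqrt_centralBinomRatio {n : ℕ} (hn : n ≠ 0) :
    (centralBinom n : ℝ) = 4 ^ n / √(π * n) * √(centralBinomRatio n) := by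
  have hsq : centralBinomRatio n = (centralBinom n * √(π * n) / 4 ^ n) ^ 2 := by
    rw [div_pow, mul_pow, sq_sqrt (by positivity), ← pow_mul, mul_comm n, pow_mul]
    unfold centralBinomRatio
    norm_num [mul_assoc]
  have : 0 < √(π * n) := by positivity
  rw [hsq, sqrt_sq (by positivity)]
  field_simp

/-- Stirling-type bounds on the central binomial coefficient:
for all integers `a ≥ 1`,
`(4^a / √(π a)) e^{-1/(8a)} < C(2a, a) < 4^a / √(π a)`. -/
theorem central_binom_bounds (a : ℕ) (ha : 0 < a) :
    ((4 : ℝ) ^ a / Real.sqrt (Real.pi * a)) * Real.exp (-1 / (8 * a)) <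
        (Nat.choose (2 * a) a : ℝ) ∧
      (Nat.choose (2 * a) a : ℝ) < (4 : ℝ) ^ a / Real.sqrt (Real.pi * a) := by
  rw [← centralBinom_eq_two_mul_choose, centralBinom_eq_mul_sqrt_centralBinomRatio ha.ne']
  have hC : 0 < (4 : ℝ) ^ a / √(π * a) := by positivity
  refine ⟨mul_lt_mul_of_pos_left ?_ hC, mul_lt_of_lt_one_right hC ?_⟩
  · have hexp : exp (-1 / (8 * a)) ^ 2 = (exp (1 / (4 * a)))⁻¹ := by
      rw [← exp_nat_mul, ← exp_neg]
      ring_nf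
    rw [lt_sqrt (exp_pos _).le, hexp, inv_lt_iff_one_lt_mul₀ (exp_pos _)]
    exact one_lt_centralBinomRatio_mul_exp ha.ne'
  · rw [sqrt_lt' one_pos, one_pow]
    exact centralBinomRatio_lt_one ha.ne'
end

section
/- For the binary Burnside process: fix x, y in {0,1}^n, and for a, b in {0,1} let n_{ab} be the number of coordinates i where x_i = a and y_i = b. Then the one-step transition probability K(x,y) equals [C(2n00, n00) * C(2n01, n01) * C(2n10, n10) * C(2n11, n11)] / [4^n * C(n00+n01, n00) * C(n10+n11, n10)]. -/
open Finset

/-- The number of coordinates `i` with `x i = a` and `y i = b`. -/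
def nab {n : ℕ} (x y : Fin n → Bool) (a b : Bool) : ℕ :=
  (Finset.univ.filter (fun i => x i = a ∧ y i = b)).card

/-- The stabilizer of `x ∈ {0,1}^n` under the coordinate-permutation action of `S_n`,
as a finset of permutations. -/
def stab {n : ℕ} (x : Fin n → Bool) : Finset (Equiv.Perm (Fin n)) :=
  Finset.univ.filter (fun σ => ∀ i, x (σ i) = x i)

/-- The set of binary `n`-tuples fixed by the coordinate permutation `σ`. -/
def fixedTuples {n : ℕ} (σ : Equiv.Perm (Fin n)) : Finset (Fin n → Bool) :=
  Finset.univ.filter (fun y => ∀ i, y (σ i) = y i)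

/-- The transition kernel of the binary Burnside process:
`K(x,y) = (1/|G_x|) ∑_{s ∈ G_x ∩ G_y} 1/|X_s|`. -/
noncomputable def burnsideK {n : ℕ} (x y : Fin n → Bool) : ℝ :=
  (1 / ((stab x).card : ℝ)) *
    ∑ σ ∈ stab x ∩ stab y, (1 : ℝ) / ((fixedTuples σ).card : ℝ)

namespace BurnsideAux

noncomputable def fixCard {α : Type*} (σ : Equiv.Perm α) : ℕ :=
  Nat.card {g : α → Bool // ∀ a, g (σ a) = g a}

lemma fixCard_ne_zero {α : Type*} [Finite α] (σ : Equiv.Perm α) : fixCard σ ≠ 0 := by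
  have : Nonempty {g : α → Bool // ∀ a, g (σ a) = g a} := ⟨⟨fun _ => true, fun _ => rfl⟩⟩
  exact Nat.card_pos.ne'

lemma fixCard_permCongr {α β : Type*} (e : α ≃ β) (σ : Equiv.Perm α) :
    fixCard (e.permCongr σ) = fixCard σ := by
  apply Nat.card_congr
  refine ⟨fun g => ⟨g.1 ∘ e, fun a => ?_⟩, fun h => ⟨h.1 ∘ e.symm, fun b => ?_⟩, ?_, ?_⟩
  · have := g.2 (e a)
    simpa [Equiv.permCongr_apply] using this
  · have := h.2 (e.symm b)
    simpa [Equiv.permCongr_apply] using this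
  · intro g; ext b; simp
  · intro h; ext a; simp

lemma fixCard_decomposeFin_zero {m : ℕ} (σ : Equiv.Perm (Fin m)) :
    fixCard (Equiv.Perm.decomposeFin.symm (0, σ)) = 2 * fixCard σ := by
  have key : ∀ a : Fin m, (Equiv.Perm.decomposeFin.symm (0, σ)) a.succ = (σ a).succ := by
    intro a
    rw [Equiv.Perm.decomposeFin_symm_apply_succ]
    simp
  have : fixCard (Equiv.Perm.decomposeFin.symm ((0 : Fin (m+1)), σ)) =
      Nat.card (Bool × {g : Fin m → Bool // ∀ a, g (σ a) = g a}) := by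
    apply Nat.card_congr
    refine ⟨fun g => (g.1 0, ⟨g.1 ∘ Fin.succ, fun a => ?_⟩),
      fun p => ⟨Fin.cases p.1 p.2.1, fun i => ?_⟩, ?_, ?_⟩
    · have := g.2 a.succ
      rwa [key] at this
    · refine Fin.cases ?_ (fun a => ?_) i
      · rw [Equiv.Perm.decomposeFin_symm_apply_zero]
      · rw [key]
        simp only [Fin.cases_succ]
        exact p.2.2 a
    · intro g
      refine Subtype.ext (funext fun i => ?_)
      refine Fin.cases rfl (fun a => ?_) i
      simp
    · intro p
      refine Prod.ext rfl (Subtype.ext (funext fun a => ?_))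
      simp
  rw [this, Nat.card_prod, Nat.card_eq_fintype_card (α := Bool), Fintype.card_bool]
  rfl

lemma fixCard_decomposeFin_succ {m : ℕ} (p : Fin m) (σ : Equiv.Perm (Fin m)) :
    fixCard (Equiv.Perm.decomposeFin.symm (p.succ, σ)) = fixCard σ := by
  set τ := Equiv.Perm.decomposeFin.symm (p.succ, σ) with hτ
  have h0 : τ 0 = p.succ := Equiv.Perm.decomposeFin_symm_apply_zero _ _
  have hs : ∀ a : Fin m, τ a.succ = if σ a = p then 0 else (σ a).succ := by
    intro a
    rw [hτ, Equiv.Perm.decomposeFin_symm_apply_succ]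
    by_cases h : σ a = p
    · simp [h]
    · rw [Equiv.swap_apply_of_ne_of_ne (Fin.succ_ne_zero _)
        (fun hc => h (Fin.succ_injective _ hc)), if_neg h]
  apply Nat.card_congr
  refine ⟨fun g => ⟨g.1 ∘ Fin.succ, fun a => ?_⟩,
    fun h => ⟨Fin.cases (h.1 p) h.1, fun i => ?_⟩, ?_, ?_⟩
  · have hfix := g.2 a.succ
    rw [hs] at hfix
    by_cases h : σ a = p
    · have h0fix := g.2 0
      rw [h0] at h0fix
      simp only [h, if_pos] at hfix
      simp only [Function.comp_apply, h]
      rw [h0fix, hfix]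
    · simp only [h, if_neg, not_false_iff] at hfix
      exact hfix
  · refine Fin.cases ?_ (fun a => ?_) i
    · rw [h0]; simp
    · rw [hs]
      by_cases hc : σ a = p
      · simp only [hc, if_pos, Fin.cases_zero, Fin.cases_succ]
        rw [← hc]
        exact h.2 a
      · simp only [hc, if_neg, not_false_iff, Fin.cases_succ]
        exact h.2 a
  · intro g
    refine Subtype.ext (funext fun i => ?_)
    refine Fin.cases ?_ (fun a => ?_) i
    · have h0fix := g.2 0
      rw [h0] at h0fix
      simpa using h0fix
    · simp
  · intro h
    refine Subtype.ext (funext fun a => ?_)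
    simp

noncomputable def permSum (α : Type*) [DecidableEq α] [Fintype α] : ℝ :=
  ∑ σ : Equiv.Perm α, ((fixCard σ : ℝ))⁻¹

lemma permSum_congr {α β : Type*} [DecidableEq α] [Fintype α] [DecidableEq β] [Fintype β]
    (e : α ≃ β) : permSum α = permSum β := by
  unfold permSum
  rw [← Equiv.sum_comp e.permCongr]
  exact Finset.sum_congr rfl fun σ _ => by rw [fixCard_permCongr]

lemma permSum_fin_succ (m : ℕ) :
    permSum (Fin (m + 1)) = ((m : ℝ) + 2⁻¹) * permSum (Fin m) := by
  unfold permSum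
  rw [← Equiv.sum_comp (Equiv.Perm.decomposeFin (n := m)).symm, Fintype.sum_prod_type]
  have : ∀ σ : Equiv.Perm (Fin m),
      ∑ p : Fin (m + 1), ((fixCard (Equiv.Perm.decomposeFin.symm (p, σ)) : ℝ))⁻¹
        = ((m : ℝ) + 2⁻¹) * ((fixCard σ : ℝ))⁻¹ := by
    intro σ
    rw [Fin.sum_univ_succ]
    have h0 : ((fixCard (Equiv.Perm.decomposeFin.symm ((0 : Fin (m+1)), σ)) : ℝ))⁻¹
        = 2⁻¹ * ((fixCard σ : ℝ))⁻¹ := by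
      rw [fixCard_decomposeFin_zero]
      push_cast
      rw [mul_inv]
    rw [h0]
    have hsucc : ∀ p : Fin m,
        ((fixCard (Equiv.Perm.decomposeFin.symm (p.succ, σ)) : ℝ))⁻¹ = ((fixCard σ : ℝ))⁻¹ :=
      fun p => by rw [fixCard_decomposeFin_succ]
    rw [Finset.sum_congr rfl fun p _ => hsucc p, Finset.sum_const, Finset.card_univ,
      Fintype.card_fin, nsmul_eq_mul]
    ring
  rw [Finset.sum_comm, Finset.sum_congr rfl fun σ _ => this σ, ← Finset.mul_sum]

lemma permSum_fin (m : ℕ) :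
    permSum (Fin m) * (m.factorial * 4 ^ m) = ((2 * m).factorial : ℝ) := by
  induction m with
  | zero => simp [permSum, fixCard]
  | succ k ih =>
    rw [permSum_fin_succ]
    have h4 : (4 : ℝ) ^ (k + 1) = 4 * 4 ^ k := by ring
    have hf : ((k + 1).factorial : ℝ) = (k + 1) * k.factorial := by
      push_cast [Nat.factorial_succ]; ring
    have hf2 : ((2 * (k + 1)).factorial : ℝ) = (2 * k + 2) * ((2 * k + 1) * (2 * k).factorial) := by
      have h1 : 2 * (k + 1) = (2 * k + 1) + 1 := by ring
      rw [h1, Nat.factorial_succ, Nat.factorial_succ]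
      push_cast; ring
    rw [hf, hf2, h4, ← ih]
    ring

lemma permSum_eq (α : Type*) [DecidableEq α] [Fintype α] :
    permSum α = ((2 * Fintype.card α).factorial : ℝ) /
      ((Fintype.card α).factorial * 4 ^ Fintype.card α) := by
  have h := permSum_fin (Fintype.card α)
  rw [← permSum_congr (Fintype.equivFin α)] at h
  rw [eq_div_iff]
  · exact h
  · positivity

variable {α ι : Type*} (f : α → ι)

/-- Permutations preserving the fibers of `f` are products of permutations of the fibers. -/
def fiberPermEquiv : {σ : Equiv.Perm α // ∀ a, f (σ a) = f a} ≃ ∀ i, Equiv.Perm {a // f a = i} where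
  toFun σ i := Equiv.Perm.subtypePerm σ.1 (fun a => by rw [σ.2 a])
  invFun g := ⟨DomMulAct.stabilizerEquiv_invFun_aux g,
    fun a => DomMulAct.comp_stabilizerEquiv_invFun g a⟩
  left_inv σ := rfl
  right_inv g := by
    funext i
    ext a
    exact DomMulAct.stabilizerEquiv_invFun_eq g a.2

def restr (G : ∀ i, ({a // f a = i} → Bool)) (a : α) : Bool := G (f a) ⟨a, rfl⟩

lemma restr_eq (G : ∀ i, ({a // f a = i} → Bool)) {a : α} {i : ι} (h : f a = i) :
    restr f G a = G i ⟨a, h⟩ := by subst h; rfl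

lemma fixCard_fiber_prod [Fintype ι] (σ : {σ : Equiv.Perm α // ∀ a, f (σ a) = f a}) :
    fixCard σ.1 = ∏ i, fixCard (fiberPermEquiv f σ i) := by
  simp only [fixCard]
  rw [← Nat.card_pi]
  apply Nat.card_congr
  refine ⟨fun g i => ⟨fun a => g.1 a.1, fun a => g.2 a.1⟩,
    fun G => ⟨restr f (fun i => (G i).1), fun a => ?_⟩, ?_, ?_⟩
  · rw [restr_eq f _ (σ.2 a)]
    exact (G (f a)).2 ⟨a, rfl⟩
  · intro g
    exact Subtype.ext (funext fun a => rfl)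
  · intro G
    funext i
    refine Subtype.ext (funext fun a => ?_)
    show restr f (fun i => (G i).1) a.1 = (G i).1 a
    exact restr_eq f (fun i => (G i).1) a.2

lemma sum_inv_fixCard [Fintype α] [DecidableEq α] [Fintype ι] [DecidableEq ι] :
    ∑ σ : {σ : Equiv.Perm α // ∀ a, f (σ a) = f a}, ((fixCard σ.1 : ℝ))⁻¹
      = ∏ i, permSum {a // f a = i} := by
  have h1 : ∀ i, permSum {a // f a = i} = ∑ π : Equiv.Perm {a // f a = i}, ((fixCard π : ℝ))⁻¹ :=
    fun i => rfl
  rw [Finset.prod_congr rfl fun i _ => h1 i,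
    Finset.prod_univ_sum (fun i => (univ : Finset (Equiv.Perm {a // f a = i})))
      (fun i π => ((fixCard π : ℝ))⁻¹),
    Fintype.piFinset_univ,
    ← Equiv.sum_comp (fiberPermEquiv f).symm]
  refine Finset.sum_congr rfl fun G _ => ?_
  rw [fixCard_fiber_prod]
  push_cast
  rw [← Finset.prod_inv_distrib]
  refine Finset.prod_congr rfl fun i _ => ?_
  rw [Equiv.apply_symm_apply]

end BurnsideAux

open BurnsideAux in
/-- Closed form for the binary Burnside transition probability:
`K(x,y) = [C(2n₀₀,n₀₀) C(2n₀₁,n₀₁) C(2n₁₀,n₁₀) C(2n₁₁,n₁₁)]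
          / [4^n C(n₀₀+n₀₁, n₀₀) C(n₁₀+n₁₁, n₁₀)]`. -/
theorem burnsideK_closed_form {n : ℕ} (x y : Fin n → Bool) :
    burnsideK x y =
      ((Nat.choose (2 * nab x y false false) (nab x y false false) *
          Nat.choose (2 * nab x y false true) (nab x y false true) *
          Nat.choose (2 * nab x y true false) (nab x y true false) *
          Nat.choose (2 * nab x y true true) (nab x y true true) : ℕ) : ℝ) /
        ((4 : ℝ) ^ n *
          (Nat.choose (nab x y false false + nab x y false true) (nab x y false false)) *
          (Nat.choose (nab x y true false + nab x y true true) (nab x y true false))) := by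
  classical
  set pxy : Fin n → Bool × Bool := fun i => (x i, y i) with hpxy
  -- fiber cardinalities
  have hfiber : ∀ p : Bool × Bool, Fintype.card {i // pxy i = p} = nab x y p.1 p.2 := by
    intro p
    rw [Fintype.card_subtype, nab]
    congr 1
    apply Finset.filter_congr
    intro i _
    simp [hpxy, Prod.ext_iff]
  have hxfiber : ∀ a : Bool,
      Fintype.card {i // x i = a} = nab x y a false + nab x y a true := by
    intro a
    rw [Fintype.card_subtype]
    have := Finset.card_filter_add_card_filter_not
      (s := Finset.univ.filter (fun i => x i = a)) (p := fun i => y i = false)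
    rw [Finset.filter_filter, Finset.filter_filter] at this
    have hft : Finset.filter (fun i => x i = a ∧ ¬ y i = false) Finset.univ
        = Finset.filter (fun i => x i = a ∧ y i = true) Finset.univ := by
      apply Finset.filter_congr
      intro i _
      simp
    rw [hft] at this
    rw [← this, nab, nab]
  -- cardinality of the stabilizer
  have hstab : (stab x).card =
      (nab x y false false + nab x y false true).factorial *
      (nab x y true false + nab x y true true).factorial := by
    rw [stab, ← Fintype.card_subtype]
    have e : {σ : Equiv.Perm (Fin n) // ∀ i, x (σ i) = x i} ≃ {g : Equiv.Perm (Fin n) // x ∘ g = x} :=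
      Equiv.subtypeEquivRight (fun σ => by
        constructor
        · intro h; funext i; exact h i
        · intro h i; exact congrFun h i)
    rw [Fintype.card_congr e, DomMulAct.stabilizer_card x, Fintype.prod_bool,
      hxfiber true, hxfiber false]
    ring
  -- the sum over the intersection
  have hinter : stab x ∩ stab y = Finset.univ.filter (fun σ => ∀ i, pxy (σ i) = pxy i) := by
    ext σ
    simp only [stab, Finset.mem_inter, Finset.mem_filter, Finset.mem_univ, true_and, hpxy,
      Prod.ext_iff, forall_and]
  have hfix : ∀ σ : Equiv.Perm (Fin n), ((fixedTuples σ).card : ℝ) = (fixCard σ : ℝ) := by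
    intro σ
    rw [fixCard, Nat.card_eq_fintype_card, Fintype.card_subtype]
    rfl
  have hsum : ∑ σ ∈ stab x ∩ stab y, (1 : ℝ) / ((fixedTuples σ).card : ℝ)
      = ∏ p : Bool × Bool, permSum {i // pxy i = p} := by
    rw [hinter, Finset.sum_subtype (p := fun σ : Equiv.Perm (Fin n) => ∀ i, pxy (σ i) = pxy i)
      (Finset.univ.filter (fun σ => ∀ i, pxy (σ i) = pxy i))
      (fun σ => by simp) (fun σ => (1 : ℝ) / ((fixedTuples σ).card : ℝ)),
      ← sum_inv_fixCard pxy]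
    refine Finset.sum_congr rfl fun σ _ => ?_
    rw [one_div, hfix]
  -- evaluate permSum on fibers
  have hps : ∀ p : Bool × Bool, permSum {i // pxy i = p} =
      ((2 * nab x y p.1 p.2).factorial : ℝ) /
        ((nab x y p.1 p.2).factorial * 4 ^ (nab x y p.1 p.2)) := by
    intro p
    rw [permSum_eq, hfiber]
  -- n is the sum of the four counts
  have hn : n = nab x y false false + nab x y false true
      + nab x y true false + nab x y true true := by
    have := Finset.card_eq_sum_card_fiberwise
      (s := (Finset.univ : Finset (Fin n))) (t := (Finset.univ : Finset (Bool × Bool)))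
      (f := pxy) (fun i _ => Finset.mem_univ _)
    rw [Finset.card_univ, Fintype.card_fin] at this
    have hcard : ∀ p : Bool × Bool,
        (Finset.univ.filter (fun i => pxy i = p)).card = nab x y p.1 p.2 := by
      intro p
      rw [← Fintype.card_subtype]
      exact hfiber p
    calc n = ∑ p : Bool × Bool, (Finset.univ.filter (fun i => pxy i = p)).card := this
      _ = ∑ p : Bool × Bool, nab x y p.1 p.2 := Finset.sum_congr rfl fun p _ => hcard p
      _ = _ := by
          rw [Fintype.sum_prod_type, Fintype.sum_bool, Fintype.sum_bool, Fintype.sum_bool]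
          ring
  -- pair-explicit version of hps
  have hps' : ∀ a b : Bool, permSum {i // pxy i = (a, b)} =
      ((2 * nab x y a b).factorial : ℝ) /
        ((nab x y a b).factorial * 4 ^ (nab x y a b)) := fun a b => hps (a, b)
  -- factorial identities
  have key : ∀ m : ℕ, ((2 * m).factorial : ℝ)
      = (2 * m).choose m * ((m.factorial : ℝ) * m.factorial) := by
    intro m
    have h1 : m ≤ 2 * m := by omega
    have h := Nat.choose_mul_factorial_mul_factorial h1
    have h2 : 2 * m - m = m := by omega
    rw [h2] at h
    push_cast [← h]
    ring
  have keyc : ∀ a b : ℕ, (((a + b).factorial : ℝ))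
      = (a + b).choose a * ((a.factorial : ℝ) * b.factorial) := by
    intro a b
    have h := Nat.choose_mul_factorial_mul_factorial (Nat.le_add_right a b)
    have h2 : a + b - a = b := by omega
    rw [h2] at h
    push_cast [← h]
    ring
  have h4n : (4 : ℝ) ^ n = 4 ^ nab x y false false * 4 ^ nab x y false true
      * 4 ^ nab x y true false * 4 ^ nab x y true true :=
    (congrArg (fun k : ℕ => (4 : ℝ) ^ k) hn).trans (by rw [pow_add, pow_add, pow_add])
  rw [burnsideK, hsum, hstab, Fintype.prod_prod_type, Fintype.prod_bool, Fintype.prod_bool,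
    Fintype.prod_bool, hps' true true, hps' true false, hps' false true, hps' false false, h4n]
  have nzf : ∀ m : ℕ, ((m.factorial : ℝ)) ≠ 0 :=
    fun m => Nat.cast_ne_zero.mpr m.factorial_ne_zero
  have nzp : ∀ m : ℕ, ((4 : ℝ) ^ m) ≠ 0 := fun m => pow_ne_zero _ (by norm_num)
  have nzc0 : ((Nat.choose (nab x y false false + nab x y false true)
      (nab x y false false) : ℝ)) ≠ 0 :=
    Nat.cast_ne_zero.mpr (Nat.choose_pos (Nat.le_add_right _ _)).ne'
  have nzc1 : ((Nat.choose (nab x y true false + nab x y true true)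
      (nab x y true false) : ℝ)) ≠ 0 :=
    Nat.cast_ne_zero.mpr (Nat.choose_pos (Nat.le_add_right _ _)).ne'
  push_cast [key, keyc]
  field_simp
end

section
/- For each fixed even m = 2k <= n, the collection of functions {f_S : S subset of {1,...,n}, |S| = m}, where f_S(x) = (-1)^{|x_S|} C(m, |x_S|), is linearly independent in the space of real-valued functions on {0,1}^n. -/
open Finset

/-- The number of ones of `x` among the coordinate set `S`. -/
def onesIn {n : ℕ} (S : Finset (Fin n)) (x : Fin n → Bool) : ℕ :=
  (S.filter (fun i => x i = true)).card

/-- The function `f_S(x) = (-1)^{|x_S|} C(m, |x_S|)`. -/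
noncomputable def fS {n : ℕ} (S : Finset (Fin n)) (m : ℕ) (x : Fin n → Bool) : ℝ :=
  (-1 : ℝ) ^ onesIn S x * (Nat.choose m (onesIn S x) : ℝ)

lemma onesIn_update_notMem {n : ℕ} {S : Finset (Fin n)} {i : Fin n} (hi : i ∉ S)
    (x : Fin n → Bool) (b : Bool) : onesIn S (Function.update x i b) = onesIn S x := by
  unfold onesIn
  congr 1
  apply filter_congr
  intro j hj
  have hji : j ≠ i := fun h => hi (h ▸ hj)
  simp [Function.update_of_ne hji]

lemma onesIn_mem {n : ℕ} {S : Finset (Fin n)} {i : Fin n} (hi : i ∈ S) (x : Fin n → Bool) :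
    onesIn S x = onesIn (S.erase i) x + (if x i = true then 1 else 0) := by
  unfold onesIn
  conv_lhs => rw [← insert_erase hi]
  rw [filter_insert]
  by_cases h : x i = true <;>
    simp [h, card_insert_of_notMem, fun hh => (notMem_erase i S) (mem_filter.1 hh).1]

lemma chi_update {n : ℕ} {T : Finset (Fin n)} {i : Fin n} (hi : i ∈ T) (x : Fin n → Bool) :
    (-1 : ℝ) ^ onesIn T (Function.update x i (!x i)) = -(-1 : ℝ) ^ onesIn T x := by
  have h1 := onesIn_mem hi (Function.update x i (!x i))
  have h2 := onesIn_mem hi x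
  rw [onesIn_update_notMem (notMem_erase i T)] at h1
  rw [Function.update_self] at h1
  cases hx : x i <;> simp only [hx, Bool.not_false, Bool.not_true] <;>
    simp [hx] at h1 h2 <;> rw [h1, h2] <;> ring

lemma pairing_zero {n m : ℕ} {S T : Finset (Fin n)} {i : Fin n} (hiT : i ∈ T) (hiS : i ∉ S) :
    ∑ x : Fin n → Bool, fS S m x * (-1 : ℝ) ^ onesIn T x = 0 := by
  apply Finset.sum_ninvolution (fun x => Function.update x i (!x i))
  · intro x
    have h1 : fS S m (Function.update x i (!x i)) = fS S m x := by
      unfold fS; rw [onesIn_update_notMem hiS]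
    rw [h1, chi_update hiT]
    ring
  · intro x _ h
    have := congrFun h i
    rw [Function.update_self] at this
    cases hx : x i <;> rw [hx] at this <;> simp at this
  · intro x; exact mem_univ _
  · intro x
    funext j
    by_cases hj : j = i
    · subst hj; simp
    · simp [Function.update_of_ne hj]

lemma diag_pos {n m : ℕ} (S : Finset (Fin n)) :
    0 < ∑ x : Fin n → Bool, fS S m x * (-1 : ℝ) ^ onesIn S x := by
  have hterm : ∀ x : Fin n → Bool,
      fS S m x * (-1 : ℝ) ^ onesIn S x = (Nat.choose m (onesIn S x) : ℝ) := by
    intro x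
    unfold fS
    rw [show (-1:ℝ) ^ onesIn S x * (Nat.choose m (onesIn S x) : ℝ) * (-1:ℝ) ^ onesIn S x
        = ((-1:ℝ) ^ onesIn S x) ^ 2 * (Nat.choose m (onesIn S x) : ℝ) by ring,
      ← pow_mul, pow_mul', neg_one_sq, one_pow, one_mul]
  simp only [hterm]
  apply Finset.sum_pos'
  · intro x _; positivity
  · refine ⟨fun _ => false, mem_univ _, ?_⟩
    have : onesIn S (fun _ => false) = 0 := by simp [onesIn]
    rw [this]
    simp

/-- For fixed even `m = 2k ≤ n`, the family `{f_S : |S| = m}` with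
`f_S(x) = (-1)^{|x_S|} C(m,|x_S|)` is linearly independent in the space of
real-valued functions on `{0,1}^n`. -/
theorem fS_linearIndependent {n k : ℕ} (hk : 2 * k ≤ n) :
    LinearIndependent ℝ
      (fun S : {S : Finset (Fin n) // S.card = 2 * k} =>
        (fS S.1 (2 * k) : (Fin n → Bool) → ℝ)) := by
  rw [linearIndependent_iff']
  intro s g hsum T hT
  have H : ∑ x : Fin n → Bool,
      (∑ S ∈ s, g S • fS S.1 (2 * k)) x * (-1 : ℝ) ^ onesIn T.1 x = 0 := by
    rw [hsum]; simp
  have Hswap : ∑ S ∈ s, g S * ∑ x : Fin n → Bool,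
      fS S.1 (2 * k) x * (-1 : ℝ) ^ onesIn T.1 x = 0 := by
    rw [← H]
    simp only [Finset.sum_apply, Pi.smul_apply, smul_eq_mul, Finset.sum_mul,
      Finset.mul_sum, mul_assoc]
    exact Finset.sum_comm
  rw [Finset.sum_eq_single T (fun S hS hne => ?_) (fun h => absurd hT h)] at Hswap
  · exact (mul_eq_zero.1 Hswap).resolve_right (ne_of_gt (diag_pos T.1))
  · have hne' : S.1 ≠ T.1 := fun h => hne (Subtype.ext h)
    have hnsub : ¬ T.1 ⊆ S.1 := fun hsub =>
      hne' (Finset.eq_of_subset_of_card_le hsub (by rw [S.2, T.2])).symm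
    obtain ⟨i, hiT, hiS⟩ := Finset.not_subset.1 hnsub
    rw [pairing_zero hiT hiS, mul_zero]
end

section
/- Let d >= 0 and m >= d be integers, and define the (d+1) x (d+1) matrix N with entries n_{ab} = sum_{r=0}^{a} (-1)^r C(m,r) C(m-b,r) C(b,a-r) for 0 <= a, b <= d. Then N is invertible; in fact, for each fixed a the map b -> n_{ab} is a polynomial in b of degree exactly a with leading coefficient C(m+a, a)/a!. -/
open Finset Polynomial

lemma lin_natDegree (m : ℕ) : (Polynomial.C (m : ℝ) - Polynomial.X).natDegree = 1 := by
  rw [show Polynomial.C (m : ℝ) - Polynomial.X = -(Polynomial.X - Polynomial.C (m:ℝ)) by ring,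
    natDegree_neg, natDegree_X_sub_C]

lemma lin_leadingCoeff (m : ℕ) : (Polynomial.C (m : ℝ) - Polynomial.X).leadingCoeff = -1 := by
  rw [show Polynomial.C (m : ℝ) - Polynomial.X = -(Polynomial.X - Polynomial.C (m:ℝ)) by ring,
    leadingCoeff_neg, leadingCoeff_X_sub_C]

lemma comp_leadingCoeff (m r : ℕ) :
    ((descPochhammer ℝ r).comp (Polynomial.C (m : ℝ) - Polynomial.X)).leadingCoeff
      = (-1 : ℝ) ^ r := by
  rw [leadingCoeff_comp (by rw [lin_natDegree]; norm_num),
    (monic_descPochhammer ℝ r).leadingCoeff, lin_leadingCoeff, one_mul,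
    descPochhammer_natDegree]

lemma comp_ne_zero (m r : ℕ) :
    ((descPochhammer ℝ r).comp (Polynomial.C (m : ℝ) - Polynomial.X)) ≠ 0 := by
  intro h
  have := comp_leadingCoeff m r
  rw [h, leadingCoeff_zero] at this
  exact (by positivity : ((-1 : ℝ)^r)^2 > 0).ne' (by rw [← this]; ring)

lemma q_natDegree (m r s : ℕ) :
    (((descPochhammer ℝ r).comp (Polynomial.C (m : ℝ) - Polynomial.X)) *
        descPochhammer ℝ s).natDegree = r + s := by
  rw [natDegree_mul (comp_ne_zero m r) (monic_descPochhammer ℝ s).ne_zero, natDegree_comp,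
    descPochhammer_natDegree, descPochhammer_natDegree, lin_natDegree, mul_one]

lemma q_leadingCoeff (m r s : ℕ) :
    (((descPochhammer ℝ r).comp (Polynomial.C (m : ℝ) - Polynomial.X)) *
        descPochhammer ℝ s).leadingCoeff = (-1 : ℝ) ^ r := by
  rw [leadingCoeff_mul, comp_leadingCoeff, (monic_descPochhammer ℝ s).leadingCoeff, mul_one]

lemma q_eval (m r s b : ℕ) (hb : b ≤ m) :
    (((descPochhammer ℝ r).comp (Polynomial.C (m : ℝ) - Polynomial.X)) *
        descPochhammer ℝ s).eval (b : ℝ)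
      = ((Nat.factorial r : ℝ) * (Nat.choose (m - b) r : ℝ)) *
        ((Nat.factorial s : ℝ) * (Nat.choose b s : ℝ)) := by
  rw [eval_mul, eval_comp]
  have h1 : (Polynomial.C (m : ℝ) - Polynomial.X).eval (b : ℝ) = ((m - b : ℕ) : ℝ) := by
    rw [Nat.cast_sub hb]; simp
  rw [h1, descPochhammer_eval_eq_descFactorial, descPochhammer_eval_eq_descFactorial,
    Nat.descFactorial_eq_factorial_mul_choose, Nat.descFactorial_eq_factorial_mul_choose]
  push_cast; ring

noncomputable def NmatPoly (m a : ℕ) : Polynomial ℝ :=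
  ∑ r ∈ Finset.range (a + 1),
    Polynomial.C ((-1 : ℝ) ^ r * (Nat.choose m r : ℝ) /
        ((Nat.factorial r : ℝ) * (Nat.factorial (a - r) : ℝ))) *
      (((descPochhammer ℝ r).comp (Polynomial.C (m : ℝ) - Polynomial.X)) *
        descPochhammer ℝ (a - r))

lemma sum_id (m a : ℕ) :
    ∑ r ∈ Finset.range (a+1),
        (Nat.choose m r : ℝ) / ((Nat.factorial r : ℝ) * (Nat.factorial (a-r) : ℝ))
      = (Nat.choose (m+a) a : ℝ) / (Nat.factorial a : ℝ) := by
  have hnat : Nat.choose (m+a) a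
      = ∑ r ∈ Finset.range (a+1), Nat.choose m r * Nat.choose a (a-r) := by
    rw [Nat.add_choose_eq, Finset.Nat.sum_antidiagonal_eq_sum_range_succ_mk]
  rw [eq_div_iff (by exact_mod_cast a.factorial_ne_zero), Finset.sum_mul, hnat]
  push_cast
  refine Finset.sum_congr rfl fun r hr => ?_
  have hra : r ≤ a := Nat.lt_succ_iff.mp (Finset.mem_range.mp hr)
  have hfact := congrArg (Nat.cast : ℕ → ℝ) (Nat.choose_mul_factorial_mul_factorial hra)
  push_cast at hfact
  rw [Nat.choose_symm hra, ← hfact]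
  have h1 : (Nat.factorial r : ℝ) ≠ 0 := by exact_mod_cast r.factorial_ne_zero
  have h2 : (Nat.factorial (a-r) : ℝ) ≠ 0 := by exact_mod_cast (a-r).factorial_ne_zero
  field_simp

lemma NmatPoly_coeff (m a : ℕ) :
    (NmatPoly m a).coeff a = (Nat.choose (m+a) a : ℝ) / (Nat.factorial a : ℝ) := by
  rw [← sum_id m a, NmatPoly, finset_sum_coeff]
  refine Finset.sum_congr rfl fun r hr => ?_
  have hra : r ≤ a := Nat.lt_succ_iff.mp (Finset.mem_range.mp hr)
  rw [coeff_C_mul]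
  have hdeg : (((descPochhammer ℝ r).comp (Polynomial.C (m : ℝ) - Polynomial.X)) *
      descPochhammer ℝ (a-r)).natDegree = a := by
    rw [q_natDegree]; omega
  have hco : (((descPochhammer ℝ r).comp (Polynomial.C (m : ℝ) - Polynomial.X)) *
      descPochhammer ℝ (a-r)).coeff a = (-1 : ℝ)^r := by
    have h := q_leadingCoeff m r (a-r)
    rw [Polynomial.leadingCoeff, hdeg] at h
    exact h
  rw [hco]
  rw [div_mul_eq_mul_div, mul_comm ((-1:ℝ)^r) _, mul_assoc, ← pow_add]
  simp [pow_add, ← two_mul, pow_mul]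

lemma NmatPoly_natDegree (m a : ℕ) :
    (NmatPoly m a).natDegree = a := by
  have hle : (NmatPoly m a).natDegree ≤ a := by
    refine Polynomial.natDegree_sum_le_of_forall_le _ _ fun r hr => ?_
    have hra : r ≤ a := Nat.lt_succ_iff.mp (Finset.mem_range.mp hr)
    refine le_trans (natDegree_C_mul_le _ _) ?_
    rw [q_natDegree]; omega
  have hne : (NmatPoly m a).coeff a ≠ 0 := by
    rw [NmatPoly_coeff]
    have : 0 < Nat.choose (m+a) a := Nat.choose_pos (Nat.le_add_left a m)
    positivity
  exact le_antisymm hle (le_natDegree_of_ne_zero hne)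

lemma NmatPoly_eval (m a b : ℕ) (hb : b ≤ m) :
    (NmatPoly m a).eval (b : ℝ)
      = ∑ r ∈ Finset.range (a + 1),
          (-1 : ℝ) ^ r * (Nat.choose m r : ℝ) * (Nat.choose (m - b) r : ℝ) *
            (Nat.choose b (a - r) : ℝ) := by
  rw [NmatPoly, eval_finset_sum]
  refine Finset.sum_congr rfl fun r hr => ?_
  rw [eval_mul, eval_C, q_eval m r (a-r) b hb]
  have h1 : (Nat.factorial r : ℝ) ≠ 0 := by exact_mod_cast r.factorial_ne_zero
  have h2 : (Nat.factorial (a-r) : ℝ) ≠ 0 := by exact_mod_cast (a-r).factorial_ne_zero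
  field_simp
open Finset

/-- The matrix `N` with entries
`n_{ab} = ∑_{r=0}^{a} (-1)^r C(m,r) C(m-b,r) C(b,a-r)` for `0 ≤ a, b ≤ d`. -/
noncomputable def Nmat (m d : ℕ) : Matrix (Fin (d + 1)) (Fin (d + 1)) ℝ :=
  fun a b =>
    ∑ r ∈ Finset.range (a.1 + 1),
      (-1 : ℝ) ^ r * (Nat.choose m r : ℝ) * (Nat.choose (m - b.1) r : ℝ) *
        (Nat.choose b.1 (a.1 - r) : ℝ)

/-- For `d ≤ m`, each row `a` of `N` is given by a polynomial in `b` of degree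
exactly `a` with leading coefficient `C(m+a, a)/a!`, and `N` is invertible. -/
theorem Nmat_row_polynomial_and_invertible (d m : ℕ) (hdm : d ≤ m) :
    (∀ a : Fin (d + 1), ∃ p : Polynomial ℝ,
        p.natDegree = a.1 ∧
        p.coeff a.1 = (Nat.choose (m + a.1) a.1 : ℝ) / (Nat.factorial a.1 : ℝ) ∧
        ∀ b : Fin (d + 1), p.eval (b.1 : ℝ) = Nmat m d a b) ∧
    (Nmat m d).det ≠ 0 := by
  have heval : ∀ a b : Fin (d + 1), (NmatPoly m a.1).eval (b.1 : ℝ) = Nmat m d a b := by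
    intro a b
    exact NmatPoly_eval m a.1 b.1 (le_trans (Nat.lt_succ_iff.mp b.isLt) hdm)
  refine ⟨fun a => ⟨NmatPoly m a.1, NmatPoly_natDegree m a.1, NmatPoly_coeff m a.1, heval a⟩, ?_⟩
  set v : Fin (d + 1) → ℝ := fun b => (b.1 : ℝ) with hv
  set M : Matrix (Fin (d + 1)) (Fin (d + 1)) ℝ :=
    Matrix.of fun a j : Fin (d + 1) => (NmatPoly m a.1).coeff j.1 with hM
  have hfac : Nmat m d = M * (Matrix.vandermonde v).transpose := by
    ext a b
    rw [Matrix.mul_apply, ← heval a b]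
    have hd : (NmatPoly m a.1).natDegree < d + 1 := by
      rw [NmatPoly_natDegree]; exact a.isLt
    rw [Polynomial.eval_eq_sum_range' hd,
      ← Fin.sum_univ_eq_sum_range (fun i => (NmatPoly m a.1).coeff i * (b.1 : ℝ) ^ i) (d + 1)]
    refine Finset.sum_congr rfl fun j _ => ?_
    simp [hM, hv, Matrix.vandermonde]
  rw [hfac, Matrix.det_mul]
  apply mul_ne_zero
  · have htri : M.BlockTriangular OrderDual.toDual := by
      intro i j hij
      simp only [hM, Matrix.of_apply]
      apply Polynomial.coeff_eq_zero_of_natDegree_lt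
      rw [NmatPoly_natDegree]
      exact hij
    rw [Matrix.det_of_lowerTriangular _ htri]
    refine Finset.prod_ne_zero_iff.mpr fun a _ => ?_
    simp only [hM, Matrix.of_apply]
    rw [NmatPoly_coeff]
    have h1 : 0 < Nat.choose (m + a.1) a.1 := Nat.choose_pos (Nat.le_add_left _ _)
    positivity
  · rw [Matrix.det_transpose]
    refine Matrix.det_vandermonde_ne_zero_iff.mpr fun i j hij => ?_
    exact Fin.ext (Nat.cast_injective hij)
end

section
/- For any reversible ergodic finite Markov chain (K, pi) with second largest absolute eigenvalue beta_star attained by eigenfunction f, and x* a state maximizing |f|, the chi-square distance from x* after l steps satisfies 4 * ||K_{x*}^l - pi||_TV^2 <= chi_{x*}^2(l) <= (1/pi(x*)) * ||K_{x*}^{2l} - pi||_TV. -/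
open Finset

/-- Total variation distance between two signed measures on a finite set,
`(1/2) ∑_y |μ y - ν y|`. -/
noncomputable def tvDist {X : Type*} [Fintype X] (μ ν : X → ℝ) : ℝ :=
  (1 / 2) * ∑ y, |μ y - ν y|

/-- For a reversible ergodic finite Markov chain `(K, π)` whose second largest
absolute eigenvalue `β⋆` is attained by an eigenfunction `f`, and a state `x⋆`
maximizing `|f|`, the chi-square distance from `x⋆` after `l` steps satisfies
`4 ‖K_{x⋆}^l - π‖_TV² ≤ χ²_{x⋆}(l) ≤ (1/π(x⋆)) ‖K_{x⋆}^{2l} - π‖_TV`. -/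
theorem l1_l2_two_sided_bound {X : Type*} [Fintype X] [DecidableEq X] [Nonempty X]
    (K : Matrix X X ℝ) (π : X → ℝ)
    (hπpos : ∀ x, 0 < π x) (hπsum : ∑ x, π x = 1)
    (hKnonneg : ∀ x y, 0 ≤ K x y) (hKrow : ∀ x, ∑ y, K x y = 1)
    (hrev : ∀ x y, π x * K x y = π y * K y x)
    (herg : ∃ l : ℕ, ∀ x y, 0 < (K ^ l) x y)
    (βstar μ : ℝ) (f : X → ℝ) (hf : f ≠ 0) (hμ : |μ| = βstar)
    (heig : ∀ x, ∑ y, K x y * f y = μ * f x)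
    (hsecond : ∀ ν : ℝ, Module.End.HasEigenvalue (Matrix.toLin' K) ν →
      ν = 1 ∨ |ν| ≤ βstar)
    (xstar : X) (hmax : ∀ y, |f y| ≤ |f xstar|) (l : ℕ) :
    4 * tvDist (fun y => (K ^ l) xstar y) π ^ 2 ≤
        ∑ y, ((K ^ l) xstar y - π y) ^ 2 / π y ∧
      ∑ y, ((K ^ l) xstar y - π y) ^ 2 / π y ≤
        (1 / π xstar) * tvDist (fun y => (K ^ (2 * l)) xstar y) π := by
  classical
  have hπx := hπpos xstar
  -- row sums of powers are 1
  have hrowpow : ∀ n : ℕ, ∀ x, ∑ y, (K ^ n) x y = 1 := by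
    intro n
    induction n with
    | zero => intro x; simp [Matrix.one_apply]
    | succ n ih =>
      intro x
      rw [pow_succ']
      simp only [Matrix.mul_apply]
      rw [Finset.sum_comm]
      simp only [← Finset.mul_sum]
      simp [ih, hKrow]
  -- reversibility of powers
  have hrevpow : ∀ n : ℕ, ∀ x y, π x * (K ^ n) x y = π y * (K ^ n) y x := by
    intro n
    induction n with
    | zero =>
      intro x y
      by_cases h : x = y <;> simp [Matrix.one_apply, h, eq_comm]
    | succ n ih =>
      intro x y
      rw [pow_succ', Matrix.mul_apply, Finset.mul_sum]
      have hz : ∀ z ∈ Finset.univ, π x * (K x z * (K ^ n) z y)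
          = π y * ((K ^ n) y z * K z x) := by
        intro z _
        calc π x * (K x z * (K ^ n) z y) = (π x * K x z) * (K ^ n) z y := by ring
          _ = (π z * K z x) * (K ^ n) z y := by rw [hrev]
          _ = (π z * (K ^ n) z y) * K z x := by ring
          _ = (π y * (K ^ n) y z) * K z x := by rw [ih]
          _ = π y * ((K ^ n) y z * K z x) := by ring
      rw [Finset.sum_congr rfl hz, ← Finset.mul_sum, ← Matrix.mul_apply, ← pow_succ,
        ← pow_succ']
  -- Lower bound (Cauchy–Schwarz)
  have lower : 4 * tvDist (fun y => (K ^ l) xstar y) π ^ 2 ≤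
      ∑ y, ((K ^ l) xstar y - π y) ^ 2 / π y := by
    set a : X → ℝ := fun y => (K ^ l) xstar y - π y with ha
    have hcs := Finset.sum_mul_sq_le_sq_mul_sq Finset.univ
      (fun y => Real.sqrt (π y)) (fun y => |a y| / Real.sqrt (π y))
    have h1 : ∀ y, Real.sqrt (π y) * (|a y| / Real.sqrt (π y)) = |a y| := by
      intro y
      have : Real.sqrt (π y) ≠ 0 := Real.sqrt_ne_zero'.mpr (hπpos y)
      field_simp
    have h2 : ∀ y, Real.sqrt (π y) ^ 2 = π y := fun y => Real.sq_sqrt (hπpos y).le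
    have h3 : ∀ y, (|a y| / Real.sqrt (π y)) ^ 2 = a y ^ 2 / π y := by
      intro y
      rw [div_pow, sq_abs, h2]
    simp only [h1] at hcs
    have hcs' : (∑ y, |a y|) ^ 2 ≤ (∑ y, π y) * ∑ y, a y ^ 2 / π y := by
      calc (∑ y, |a y|) ^ 2 ≤ (∑ y, Real.sqrt (π y) ^ 2) *
            ∑ y, (|a y| / Real.sqrt (π y)) ^ 2 := hcs
        _ = (∑ y, π y) * ∑ y, a y ^ 2 / π y := by
            rw [Finset.sum_congr rfl (fun y _ => h2 y),
              Finset.sum_congr rfl (fun y _ => h3 y)]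
    rw [hπsum, one_mul] at hcs'
    have : 4 * tvDist (fun y => (K ^ l) xstar y) π ^ 2 = (∑ y, |a y|) ^ 2 := by
      simp only [tvDist, ha]
      ring
    rw [this]
    exact hcs'
  refine ⟨lower, ?_⟩
  -- chi-square identity
  have hKL : ∀ y, (K ^ l) y xstar = π xstar * (K ^ l) xstar y / π y := by
    intro y
    rw [eq_div_iff (hπpos y).ne']
    linear_combination (-1 : ℝ) * hrevpow l xstar y
  have hterm : ∀ y, ((K ^ l) xstar y - π y) ^ 2 / π y
      = (K ^ l) xstar y * (K ^ l) y xstar / π xstar - 2 * (K ^ l) xstar y + π y := by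
    intro y
    rw [hKL y]
    have hy := (hπpos y).ne'
    have hx := hπx.ne'
    field_simp
    ring
  have hKK : ∑ y, (K ^ l) xstar y * (K ^ l) y xstar = (K ^ (2 * l)) xstar xstar := by
    rw [two_mul, pow_add, Matrix.mul_apply]
  have key : ∑ y, ((K ^ l) xstar y - π y) ^ 2 / π y
      = ((K ^ (2 * l)) xstar xstar - π xstar) / π xstar := by
    rw [Finset.sum_congr rfl (fun y _ => hterm y)]
    rw [Finset.sum_add_distrib, Finset.sum_sub_distrib, ← Finset.sum_div, hKK,
      ← Finset.mul_sum, hrowpow l xstar, hπsum]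
    field_simp
    ring
  rw [key]
  -- final bound: (K^{2l}(x,x) - π x) ≤ tv
  set b : X → ℝ := fun y => (K ^ (2 * l)) xstar y - π y with hb
  clear_value b
  have hsum0 : ∑ y, b y = 0 := by
    simp [hb, Finset.sum_sub_distrib, hrowpow, hπsum]
  have hsplit : b xstar + ∑ y ∈ Finset.univ.erase xstar, b y = 0 := by
    rw [Finset.add_sum_erase _ b (Finset.mem_univ xstar)]
    exact hsum0
  have habs : b xstar ≤ ∑ y ∈ Finset.univ.erase xstar, |b y| := by
    have : b xstar = -∑ y ∈ Finset.univ.erase xstar, b y := by linarith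
    rw [this]
    calc -∑ y ∈ Finset.univ.erase xstar, b y ≤ |∑ y ∈ Finset.univ.erase xstar, b y| :=
          neg_le_abs _
      _ ≤ ∑ y ∈ Finset.univ.erase xstar, |b y| := Finset.abs_sum_le_sum_abs _ _
  have habssplit : ∑ y, |b y| = |b xstar| + ∑ y ∈ Finset.univ.erase xstar, |b y| := by
    rw [Finset.add_sum_erase _ (fun y => |b y|) (Finset.mem_univ xstar)]
  have hbx : b xstar ≤ tvDist (fun y => (K ^ (2 * l)) xstar y) π := by
    have h1 : b xstar ≤ |b xstar| := le_abs_self _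
    have : tvDist (fun y => (K ^ (2 * l)) xstar y) π = (1 / 2) * ∑ y, |b y| := by
      rw [tvDist, hb]
    rw [this, habssplit]
    set S := ∑ y ∈ Finset.univ.erase xstar, |b y| with hS
    linarith [h1, habs]
  rw [div_le_iff₀ hπx]
  calc (K ^ (2 * l)) xstar xstar - π xstar
      ≤ tvDist (fun y => (K ^ (2 * l)) xstar y) π := by
        have : b xstar = (K ^ (2 * l)) xstar xstar - π xstar := by rw [hb]
        linarith [hbx]
    _ = 1 / π xstar * tvDist (fun y => (K ^ (2 * l)) xstar y) π * π xstar := by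
        field_simp
end

section
/- Under the stationary distribution pi_n(x) = 1/((n+1) C(n,|x|)) on {0,1}^n, the number of alternations T(x) = #{1 <= i <= n-1 : x_i != x_{i+1}} has expectation (n-1)/3 and variance (n^2 + 10n - 14)/45 for all n >= 2. -/
/-!
Since `1 / ((n + 1) * C(n, k)) = k! (n - k)! / (n + 1)! = ∫₀¹ tᵏ (1 - t)ⁿ⁻ᵏ dt`, the measure
`π_n` is the law of `n` tosses of a coin whose bias is uniform on `[0, 1]`. Its marginal on any `r`
coordinates is therefore `π_r`; combinatorially this comes from the Beta recursion
`β(a + 1, b) + β(a, b + 1) = β(a, b)` for `β(a, b) = a! b! / (a + b + 1)!`.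
Writing `T` as the number of disagreeing edges among the `m = n - 1` edges of the path, `E T` and
`E T²` reduce to the probabilities that one edge, two adjacent edges or two disjoint edges
disagree. These are sums of `π_2`, `π_3`, `π_4` over explicit patterns: `1/3`, `1/6` and `2/15`.
-/

open Finset

/-- The number of ones of `x`. -/
def ones {n : ℕ} (x : Fin n → Bool) : ℕ :=
  (Finset.univ.filter (fun i => x i = true)).card

/-- The stationary distribution `π_n(x) = 1/((n+1) C(n,|x|))` on `{0,1}^n`. -/
noncomputable def statDist {n : ℕ} (x : Fin n → Bool) : ℝ :=
  1 / ((n + 1 : ℝ) * (Nat.choose n (ones x) : ℝ))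

/-- The number of alternations of a binary `(m+1)`-tuple:
`T(x) = #\{1 ≤ i ≤ n-1 : x_i ≠ x_{i+1}\}` with `n = m+1`. -/
def alternations {m : ℕ} (x : Fin (m + 1) → Bool) : ℕ :=
  (Finset.univ.filter (fun i : Fin m => x i.castSucc ≠ x i.succ)).card

open scoped Nat

noncomputable def betaWeight (a b : ℕ) : ℝ := (a ! * b ! : ℝ) / (a + b + 1)!

lemma betaWeight_succ_add_betaWeight_succ (a b : ℕ) :
    betaWeight (a + 1) b + betaWeight a (b + 1) = betaWeight a b := by
  simp only [betaWeight, show a + 1 + b + 1 = a + b + 1 + 1 by ring,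
    show a + (b + 1) + 1 = a + b + 1 + 1 by ring]
  rw [Nat.factorial_succ (a + b + 1), Nat.factorial_succ a, Nat.factorial_succ b]
  push_cast
  field_simp
  ring

lemma sum_choose_mul_betaWeight (d a b : ℕ) :
    ∑ k ∈ range (d + 1), (d.choose k : ℝ) * betaWeight (a + k) (b + (d - k)) =
      betaWeight a b := by
  induction d generalizing a b with
  | zero => simp
  | succ d ih =>
    rw [sum_choose_succ_mul (fun k l => betaWeight (a + k) (b + l)),
      ← betaWeight_succ_add_betaWeight_succ, ← ih a (b + 1), ← ih (a + 1) b, add_comm]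
    congr 1 <;> refine sum_congr rfl fun k hk => ?_
    · rw [add_comm k 1, ← add_assoc]
    · rw [show d + 1 - k = 1 + (d - k) by have := mem_range.mp hk; omega, add_assoc]

lemma statDist_eq_betaWeight {n : ℕ} (x : Fin n → Bool) :
    statDist x = betaWeight (ones x) (n - ones x) := by
  have hle : ones x ≤ n := (card_filter_le _ _).trans_eq (card_fin n)
  have h := Nat.choose_mul_factorial_mul_factorial hle
  rw [statDist, betaWeight, Nat.add_sub_cancel' hle, Nat.factorial_succ, ← h]
  push_cast
  field_simp

lemma sum_fun_bool_apply_card_filter {ι R : Type*} [Fintype ι] [DecidableEq ι] [Semiring R]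
    (f : ℕ → R) :
    ∑ z : ι → Bool, f #{i | z i = true} =
      ∑ k ∈ range (Fintype.card ι + 1), ((Fintype.card ι).choose k : R) * f k := by
  have h := sum_powerset_apply_card f (x := (univ : Finset ι))
  simp only [powerset_univ, card_univ, nsmul_eq_mul] at h
  rw [← h]
  exact sum_nbij' (fun z => ({i | z i = true} : Finset ι)) (fun s i => decide (i ∈ s))
    (by simp) (by simp) (fun z _ => by ext; simp) (fun s _ => by ext; simp) (fun z _ => rfl)

section Marginal

variable {n r : ℕ} {p : Fin r → Fin n}

lemma ones_eq_ones_comp_add (hp : Function.Injective p) (x : Fin n → Bool) :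
    ones x = ones (x ∘ p) + #{i : {i // i ∉ Set.range p} | x i = true} := by
  simp only [ones, card_filter]
  rw [← Fintype.sum_subtype_add_sum_subtype (· ∈ Set.range p)]
  congr 1
  convert (Fintype.sum_equiv (Equiv.ofInjective p hp) (fun t => if (x ∘ p) t = true then 1 else 0)
    (fun i => if x i = true then 1 else 0) fun t => rfl).symm

lemma sum_filter_comp_eq_apply_ones (hp : Function.Injective p) (b : Fin r → Bool)
    (f : ℕ → ℝ) :
    ∑ x : Fin n → Bool with x ∘ p = b, f (ones x) =
      ∑ k ∈ range (n - r + 1), ((n - r).choose k : ℝ) * f (ones b + k) := by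
  let E : (Fin n → Bool) ≃ (Fin r → Bool) × ({i // i ∉ Set.range p} → Bool) :=
    (Equiv.piEquivPiSubtypeProd (· ∈ Set.range p) fun _ => Bool).trans
      ((Equiv.arrowCongr (Equiv.ofInjective p hp).symm (Equiv.refl Bool)).prodCongr (Equiv.refl _))
  have hfst : ∀ y, E.symm y ∘ p = y.1 := fun y => congrArg Prod.fst (E.apply_symm_apply y)
  have hsnd : ∀ y (i : {i // i ∉ Set.range p}), E.symm y i = y.2 i :=
    fun y => congrFun (congrArg Prod.snd (E.apply_symm_apply y))
  have hcard : Fintype.card {i // i ∉ Set.range p} = n - r := by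
    rw [Fintype.card_subtype_compl, Fintype.card_fin, Set.card_range_of_injective hp,
      Fintype.card_fin]
  calc ∑ x : Fin n → Bool with x ∘ p = b, f (ones x)
      = ∑ y : (Fin r → Bool) × ({i // i ∉ Set.range p} → Bool) with y.1 = b,
          f (ones (E.symm y)) := by
        rw [sum_filter, sum_filter, ← E.symm.sum_comp]
        simp only [hfst]
    _ = ∑ z : {i // i ∉ Set.range p} → Bool, f (ones b + #{i | z i = true}) := by
        rw [sum_filter, Fintype.sum_prod_type,
          sum_eq_single b (fun u _ hu => sum_eq_zero fun z _ => if_neg hu) (by simp)]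
        refine sum_congr rfl fun z _ => ?_
        rw [if_pos rfl, ones_eq_ones_comp_add hp, hfst]
        simp only [hsnd]
    _ = _ := by rw [sum_fun_bool_apply_card_filter (fun k => f (ones b + k)), hcard]

lemma sum_statDist_filter_comp_eq (hp : Function.Injective p) (b : Fin r → Bool) :
    ∑ x : Fin n → Bool with x ∘ p = b, statDist x = statDist b := by
  have hr : r ≤ n := by simpa using Fintype.card_le_of_injective p hp
  have hb : ones b ≤ r := (card_filter_le _ _).trans_eq (card_fin r)
  simp only [statDist_eq_betaWeight]
  refine (sum_filter_comp_eq_apply_ones hp b fun k => betaWeight k (n - k)).trans ?_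
  rw [← sum_choose_mul_betaWeight (n - r)]
  refine sum_congr rfl fun k hk => ?_
  have := mem_range.mp hk
  congr 2
  omega

lemma sum_statDist_filter_comp_mem (hp : Function.Injective p) (B : Finset (Fin r → Bool)) :
    ∑ x : Fin n → Bool with x ∘ p ∈ B, statDist x = ∑ b ∈ B, statDist b := by
  rw [← sum_fiberwise_of_maps_to (g := (· ∘ p)) (t := B) fun x hx => (mem_filter.mp hx).2]
  refine sum_congr rfl fun b hb => ?_
  rw [filter_filter, ← sum_statDist_filter_comp_eq hp b]
  congr 1
  ext x
  simp only [mem_filter, mem_univ, true_and, and_iff_right_iff_imp]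
  rintro rfl
  exact hb

end Marginal

lemma sum_statDist (n : ℕ) : ∑ x : Fin n → Bool, statDist x = 1 := by
  have h := sum_statDist_filter_comp_eq (p := (Fin.elim0 : Fin 0 → Fin n))
    (Function.injective_of_subsingleton _) Fin.elim0
  simpa [Subsingleton.elim _ (Fin.elim0 : Fin 0 → Bool), statDist, ones] using h

lemma sum_statDist_of_forall_choose_eq {r c : ℕ} (B : Finset (Fin r → Bool))
    (h : ∀ b ∈ B, r.choose (ones b) = c) :
    ∑ b ∈ B, statDist b = #B / ((r + 1) * c) := by
  rw [sum_congr rfl fun b hb => by rw [statDist, h b hb], sum_const, nsmul_eq_mul]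
  ring

section Patterns

variable {n : ℕ}

lemma sum_statDist_filter_ne {a b : Fin n} (hab : a ≠ b) :
    ∑ x : Fin n → Bool with x a ≠ x b, statDist x = 1 / 3 := by
  have hp : Function.Injective ![a, b] := by
    intro s t; fin_cases s <;> fin_cases t <;> simp [hab, hab.symm]
  have h := sum_statDist_filter_comp_mem hp {c | c 0 ≠ c 1}
  simp only [mem_filter, mem_univ, true_and, Function.comp_apply, Matrix.cons_val_zero,
    Matrix.cons_val_one] at h
  rw [h, sum_statDist_of_forall_choose_eq (c := 2) _ (by decide),
    show #{c : Fin 2 → Bool | c 0 ≠ c 1} = 2 by decide]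
  norm_num

lemma sum_statDist_filter_ne_and_ne_of_shared {a b c : Fin n}
    (hp : Function.Injective ![a, b, c]) :
    ∑ x : Fin n → Bool with x a ≠ x b ∧ x b ≠ x c, statDist x = 1 / 6 := by
  have h := sum_statDist_filter_comp_mem hp {y | y 0 ≠ y 1 ∧ y 1 ≠ y 2}
  simp only [mem_filter, mem_univ, true_and, Function.comp_apply, Matrix.cons_val_zero,
    Matrix.cons_val_one, Matrix.cons_val] at h
  rw [h, sum_statDist_of_forall_choose_eq (c := 3) _ (by decide),
    show #{y : Fin 3 → Bool | y 0 ≠ y 1 ∧ y 1 ≠ y 2} = 2 by decide]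
  norm_num

lemma sum_statDist_filter_ne_and_ne_of_disjoint {a b c d : Fin n}
    (hp : Function.Injective ![a, b, c, d]) :
    ∑ x : Fin n → Bool with x a ≠ x b ∧ x c ≠ x d, statDist x = 2 / 15 := by
  have h := sum_statDist_filter_comp_mem hp {y | y 0 ≠ y 1 ∧ y 2 ≠ y 3}
  simp only [mem_filter, mem_univ, true_and, Function.comp_apply, Matrix.cons_val_zero,
    Matrix.cons_val_one, Matrix.cons_val] at h
  rw [h, sum_statDist_of_forall_choose_eq (c := 6) _ (by decide),
    show #{y : Fin 4 → Bool | y 0 ≠ y 1 ∧ y 2 ≠ y 3} = 4 by decide]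
  norm_num

end Patterns

section Moments

variable {α ι R : Type*} [Fintype α] [Fintype ι] [CommSemiring R] (w : α → R)
  (E : ι → α → Prop) [∀ i, DecidablePred (E i)]

lemma sum_mul_card_filter : ∑ x, w x * #{i | E i x} = ∑ i, ∑ x with E i x, w x := by
  simp only [natCast_card_filter, mul_sum, mul_boole, sum_filter]
  exact sum_comm

lemma sum_mul_card_filter_sq :
    ∑ x, w x * (#{i | E i x} : R) ^ 2 = ∑ i, ∑ k, ∑ x with E i x ∧ E k x, w x := by
  have hsq : ∀ x, (#{i | E i x} : R) ^ 2 = ∑ i, ∑ k, if E i x ∧ E k x then 1 else 0 := by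
    intro x
    simp only [sq, natCast_card_filter, sum_mul_sum, ite_zero_mul_ite_zero, mul_one]
  simp only [hsq, mul_sum, mul_boole, sum_filter]
  rw [sum_comm]
  exact sum_congr rfl fun i _ => sum_comm

end Moments

lemma sum_sum_ite_val_add_one_eq {m : ℕ} (hm : 1 ≤ m) (c : ℝ) :
    ∑ i : Fin m, ∑ k : Fin m, (if i.val + 1 = k.val then c else 0) = (m - 1) * c := by
  obtain ⟨m, rfl⟩ := Nat.exists_eq_add_of_le' hm
  rw [sum_comm, Fin.sum_univ_succ]
  have hzero : ∀ i : Fin (m + 1), i.val + 1 ≠ (0 : Fin (m + 1)).val :=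
    fun i => Nat.succ_ne_zero _
  have hsucc : ∀ (j : Fin m) (i : Fin (m + 1)), i.val + 1 = j.succ.val ↔ i = j.castSucc := by
    simp [Fin.ext_iff]
  simp only [hzero, hsucc, if_false, sum_const_zero, sum_ite_eq', mem_univ, if_true, sum_const,
    card_univ, Fintype.card_fin, zero_add, nsmul_eq_mul]
  push_cast
  ring

section Alternations

variable {m : ℕ}

lemma sum_statDist_filter_alternation (i : Fin m) :
    ∑ x : Fin (m + 1) → Bool with x i.castSucc ≠ x i.succ, statDist x = 1 / 3 :=
  sum_statDist_filter_ne Fin.castSucc_lt_succ.ne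

lemma sum_statDist_filter_alternation_pair_of_adjacent {i k : Fin m} (h : i.val + 1 = k.val) :
    ∑ x : Fin (m + 1) → Bool with x i.castSucc ≠ x i.succ ∧ x k.castSucc ≠ x k.succ,
      statDist x = 1 / 6 := by
  rw [show k.castSucc = i.succ from Fin.ext (by simp [h])]
  apply sum_statDist_filter_ne_and_ne_of_shared
  intro s t
  fin_cases s <;> fin_cases t <;> simp [Fin.ext_iff] <;> omega

lemma sum_statDist_filter_alternation_pair_of_far {i k : Fin m} (h : i.val + 2 ≤ k.val) :
    ∑ x : Fin (m + 1) → Bool with x i.castSucc ≠ x i.succ ∧ x k.castSucc ≠ x k.succ,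
      statDist x = 2 / 15 := by
  apply sum_statDist_filter_ne_and_ne_of_disjoint
  intro s t
  fin_cases s <;> fin_cases t <;> simp [Fin.ext_iff] <;> omega

lemma sum_statDist_filter_alternation_pair (i k : Fin m) :
    ∑ x : Fin (m + 1) → Bool with x i.castSucc ≠ x i.succ ∧ x k.castSucc ≠ x k.succ,
      statDist x = 2 / 15 + (if i = k then 1 / 5 else 0) + (if i.val + 1 = k.val then 1 / 30 else 0)
        + (if k.val + 1 = i.val then 1 / 30 else 0) := by
  have hswap :
      ∑ x : Fin (m + 1) → Bool with x i.castSucc ≠ x i.succ ∧ x k.castSucc ≠ x k.succ, statDist x =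
        ∑ x : Fin (m + 1) → Bool with x k.castSucc ≠ x k.succ ∧ x i.castSucc ≠ x i.succ,
          statDist x := by
    simp only [and_comm]
  rcases (by omega : i.val = k.val ∨ i.val + 1 = k.val ∨ k.val + 1 = i.val ∨
    i.val + 2 ≤ k.val ∨ k.val + 2 ≤ i.val) with h | h | h | h | h
  · obtain rfl := Fin.ext h
    simp only [and_self, sum_statDist_filter_alternation]
    norm_num
  · rw [sum_statDist_filter_alternation_pair_of_adjacent h, if_neg (by rintro rfl; omega),
      if_pos h, if_neg (by omega)]
    norm_num
  · rw [hswap, sum_statDist_filter_alternation_pair_of_adjacent h, if_neg (by rintro rfl; omega),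
      if_neg (by omega), if_pos h]
    norm_num
  · rw [sum_statDist_filter_alternation_pair_of_far h, if_neg (by rintro rfl; omega),
      if_neg (by omega), if_neg (by omega)]
    norm_num
  · rw [hswap, sum_statDist_filter_alternation_pair_of_far h, if_neg (by rintro rfl; omega),
      if_neg (by omega), if_neg (by omega)]
    norm_num

lemma sum_statDist_mul_alternations :
    ∑ x : Fin (m + 1) → Bool, statDist x * alternations x = m / 3 := by
  simp only [alternations]
  rw [sum_mul_card_filter statDist fun (i : Fin m) x => x i.castSucc ≠ x i.succ]
  simp only [sum_statDist_filter_alternation, sum_const, card_univ, Fintype.card_fin, nsmul_eq_mul]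
  ring

lemma sum_statDist_mul_alternations_sq (hm : 1 ≤ m) :
    ∑ x : Fin (m + 1) → Bool, statDist x * (alternations x : ℝ) ^ 2 =
      (2 * m ^ 2 + 4 * m - 1) / 15 := by
  simp only [alternations]
  rw [sum_mul_card_filter_sq statDist fun (i : Fin m) x => x i.castSucc ≠ x i.succ]
  simp only [sum_statDist_filter_alternation_pair, sum_add_distrib]
  rw [sum_comm (f := fun i k : Fin m => if k.val + 1 = i.val then (1 / 30 : ℝ) else 0),
    sum_sum_ite_val_add_one_eq hm]
  simp only [sum_ite_eq, mem_univ, if_true, sum_const, card_univ, Fintype.card_fin, nsmul_eq_mul]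
  ring

end Alternations

/-- Under `π_n` on `{0,1}^n` with `n = m+1 ≥ 2`, the alternation count `T(x)`
has mean `(n-1)/3` and variance `(n² + 10n - 14)/45`. -/
theorem alternations_mean_variance (m : ℕ) (hm : 1 ≤ m) :
    (∑ x : Fin (m + 1) → Bool, statDist x * (alternations x : ℝ) =
        (((m : ℝ) + 1) - 1) / 3) ∧
    (∑ x : Fin (m + 1) → Bool,
        statDist x * ((alternations x : ℝ) - (((m : ℝ) + 1) - 1) / 3) ^ 2 =
      (((m : ℝ) + 1) ^ 2 + 10 * ((m : ℝ) + 1) - 14) / 45) := by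
  have hμ : ((m : ℝ) + 1 - 1) / 3 = m / 3 := by ring
  refine ⟨by rw [sum_statDist_mul_alternations, hμ], ?_⟩
  have hexpand : ∀ x : Fin (m + 1) → Bool, statDist x * ((alternations x : ℝ) - m / 3) ^ 2 =
      statDist x * (alternations x : ℝ) ^ 2 - 2 * (m / 3) * (statDist x * alternations x)
        + (m / 3) ^ 2 * statDist x := fun x => by ring
  rw [hμ, sum_congr rfl fun x _ => hexpand x, sum_add_distrib, sum_sub_distrib, ← mul_sum,
    ← mul_sum, sum_statDist_mul_alternations_sq hm, sum_statDist_mul_alternations, sum_statDist]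
  ring
end

section
/- For any nonnegative integers c1 >= c2 and c3, the identity (1/(c3+c1+1)) * sum_{i=0}^{c3} C(c3, i) / C(c3+c1, i+c2) = 1 / ((c1+1) * C(c1, c2)) holds. -/
open Finset

lemma base_sum (s : ℕ) : ∀ n, ∑ i ∈ Finset.range (n+1), (n - i + s).choose s
    = (n + s + 1).choose (s + 1) := by
  intro n
  rw [← Nat.sum_range_add_choose n s,
    ← Finset.sum_range_reflect (fun i => (i + s).choose s) (n+1)]
  refine Finset.sum_congr rfl fun i _ => by congr 1

lemma key_sum (r : ℕ) : ∀ s n, ∑ i ∈ Finset.range (n+1), (i + r).choose r * (n - i + s).choose s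
    = (n + r + s + 1).choose (r + s + 1) := by
  induction r with
  | zero =>
    intro s n
    simp only [Nat.add_zero, Nat.choose_zero_right, one_mul, Nat.zero_add]
    exact base_sum s n
  | succ r ih =>
    intro s n
    have h1 : ∀ i : ℕ, (i + (r+1)).choose (r+1) = ∑ j ∈ Finset.range (i+1), (j + r).choose r := by
      intro i
      rw [show i + (r+1) = i + r + 1 by omega, Nat.sum_range_add_choose i r]
    calc ∑ i ∈ Finset.range (n+1), (i + (r+1)).choose (r+1) * (n - i + s).choose s
        = ∑ i ∈ Finset.range (n+1), ∑ j ∈ Finset.range (i+1),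
            (j + r).choose r * (n - i + s).choose s := by
          refine Finset.sum_congr rfl fun i _ => ?_
          rw [h1 i, Finset.sum_mul]
      _ = ∑ i ∈ Finset.Ico 0 (n+1), ∑ j ∈ Finset.Ico 0 (i+1),
            (j + r).choose r * (n - i + s).choose s := by
          simp only [Finset.range_eq_Ico]
      _ = ∑ j ∈ Finset.Ico 0 (n+1), ∑ i ∈ Finset.Ico j (n+1),
            (j + r).choose r * (n - i + s).choose s := by
          rw [Finset.sum_Ico_Ico_comm 0 (n+1) (fun j i => (j + r).choose r * (n - i + s).choose s)]
      _ = ∑ j ∈ Finset.range (n+1), (j + r).choose r * (n - j + (s+1)).choose (s+1) := by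
          rw [← Finset.range_eq_Ico]
          refine Finset.sum_congr rfl fun j hj => ?_
          simp only [Finset.mem_range] at hj
          rw [← Finset.mul_sum]
          congr 1
          rw [Finset.sum_Ico_eq_sum_range]
          have hnj : n + 1 - j = (n - j) + 1 := by omega
          rw [hnj]
          calc ∑ k ∈ Finset.range (n - j + 1), (n - (j + k) + s).choose s
              = ∑ k ∈ Finset.range (n - j + 1), ((n - j) - k + s).choose s := by
                refine Finset.sum_congr rfl fun k _ => by rw [Nat.sub_add_eq]
            _ = ((n - j) + s + 1).choose (s + 1) := base_sum s (n - j)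
            _ = (n - j + (s+1)).choose (s+1) := by congr 1
      _ = (n + (r+1) + s + 1).choose ((r+1) + s + 1) := by
          rw [ih (s+1) n]
          congr 1 <;> omega

lemma term_eq (c1 c2 c3 i : ℕ) (h : c2 ≤ c1) (hi : i ≤ c3) :
    (Nat.choose c3 i : ℝ) / (Nat.choose (c3 + c1) (i + c2) : ℝ) =
    (((i + c2).choose c2 * ((c3 - i) + (c1 - c2)).choose (c1 - c2) : ℕ) : ℝ) *
      ((c3.factorial : ℝ) * c2.factorial * (c1 - c2).factorial / (c3 + c1).factorial) := by
  have hf : ∀ n : ℕ, (n.factorial : ℝ) ≠ 0 := fun n => Nat.cast_ne_zero.2 n.factorial_ne_zero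
  have e1 : (Nat.choose c3 i : ℝ) = c3.factorial / (i.factorial * (c3 - i).factorial) :=
    Nat.cast_choose ℝ hi
  have e2 : (Nat.choose (c3 + c1) (i + c2) : ℝ)
      = (c3 + c1).factorial / ((i + c2).factorial * ((c3 - i) + (c1 - c2)).factorial) := by
    rw [Nat.cast_choose ℝ (by omega), show c3 + c1 - (i + c2) = (c3 - i) + (c1 - c2) by omega]
  have e3 : (((i + c2).choose c2 : ℕ) : ℝ) = (i + c2).factorial / (c2.factorial * i.factorial) := by
    rw [Nat.cast_choose ℝ (by omega), show i + c2 - c2 = i by omega]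
  have e4 : ((((c3 - i) + (c1 - c2)).choose (c1 - c2) : ℕ) : ℝ)
      = ((c3 - i) + (c1 - c2)).factorial / ((c1 - c2).factorial * (c3 - i).factorial) := by
    rw [Nat.cast_choose ℝ (by omega), show (c3 - i) + (c1 - c2) - (c1 - c2) = c3 - i by omega]
  push_cast
  rw [e1, e2, e3, e4]
  field_simp

/-- The binomial ratio identity
`(1/(c₃+c₁+1)) ∑_{i=0}^{c₃} C(c₃,i)/C(c₃+c₁, i+c₂) = 1/((c₁+1) C(c₁,c₂))`
for `c₂ ≤ c₁`. -/
theorem binom_ratio_sum (c1 c2 c3 : ℕ) (h : c2 ≤ c1) :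
    (1 / ((c3 : ℝ) + c1 + 1)) *
        ∑ i ∈ Finset.range (c3 + 1),
          (Nat.choose c3 i : ℝ) / (Nat.choose (c3 + c1) (i + c2) : ℝ) =
      1 / (((c1 : ℝ) + 1) * (Nat.choose c1 c2 : ℝ)) := by
  have hf : ∀ n : ℕ, (n.factorial : ℝ) ≠ 0 := fun n => Nat.cast_ne_zero.2 n.factorial_ne_zero
  have hsum : ∑ i ∈ Finset.range (c3 + 1),
      (Nat.choose c3 i : ℝ) / (Nat.choose (c3 + c1) (i + c2) : ℝ)
      = (((c3 + c1 + 1).choose (c1 + 1) : ℕ) : ℝ) *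
        ((c3.factorial : ℝ) * c2.factorial * (c1 - c2).factorial / (c3 + c1).factorial) := by
    rw [Finset.sum_congr rfl fun i hi =>
      term_eq c1 c2 c3 i h (Nat.lt_succ_iff.mp (Finset.mem_range.mp hi))]
    rw [← Finset.sum_mul, ← Nat.cast_sum]
    congr 2
    have := key_sum c2 (c1 - c2) c3
    rw [this]
    congr 1 <;> omega
  rw [hsum]
  have e1 : (((c3 + c1 + 1).choose (c1 + 1) : ℕ) : ℝ)
      = (c3 + c1 + 1).factorial / ((c1 + 1).factorial * c3.factorial) := by
    rw [Nat.cast_choose ℝ (by omega), show c3 + c1 + 1 - (c1 + 1) = c3 by omega]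
  have e2 : ((Nat.choose c1 c2 : ℕ) : ℝ) = c1.factorial / (c2.factorial * (c1 - c2).factorial) :=
    Nat.cast_choose ℝ h
  have e3 : ((c3 + c1 + 1).factorial : ℝ) = ((c3 : ℝ) + c1 + 1) * (c3 + c1).factorial := by
    rw [show c3 + c1 + 1 = (c3 + c1) + 1 from rfl, Nat.factorial_succ]
    push_cast
    ring
  have e4 : ((c1 + 1).factorial : ℝ) = ((c1 : ℝ) + 1) * c1.factorial := by
    rw [Nat.factorial_succ]; push_cast; ring
  have h5 : ((c3 : ℝ) + c1 + 1) ≠ 0 := by positivity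
  have h6 : ((c1 : ℝ) + 1) ≠ 0 := by positivity
  rw [e1, e3, e4]
  push_cast [e2]
  field_simp
end

section
/- For any even integer m and any n >= m, and any subset S of {1,...,n} with |S| = m, the function f_S(x) = (-1)^{|x_S|} C(m, |x_S|) satisfies sum_{x in {0,1}^n} f_S(x)^2 / ((n+1) C(n, |x|)) = C(2m, m) / (m+1). In particular this norm is independent of n and of the choice of S. -/
set_option maxHeartbeats 1000000


open Finset

lemma choose_ne0 (n k : ℕ) (h : k ≤ n) : (Nat.choose n k : ℝ) ≠ 0 :=
  Nat.cast_ne_zero.mpr (Nat.choose_pos h).ne'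

lemma Bnat (n k : ℕ) :
    (n+2) * Nat.choose (n+1) k * Nat.choose (n+1) (k+1)
      = (n+1) * Nat.choose n k * Nat.choose (n+2) (k+1) := by
  have h1 := Nat.add_one_mul_choose_eq (n+1) k
  have h2 := Nat.add_one_mul_choose_eq n k
  calc (n+2) * Nat.choose (n+1) k * Nat.choose (n+1) (k+1)
      = Nat.choose (n+2) (k+1) * (k+1) * Nat.choose (n+1) (k+1) := by rw [h1]
    _ = (Nat.choose (n+1) (k+1) * (k+1)) * Nat.choose (n+2) (k+1) := by ring
    _ = (n+1) * Nat.choose n k * Nat.choose (n+2) (k+1) := by rw [← h2]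

lemma Breal (n k : ℕ) (h : k ≤ n) :
    (1:ℝ)/(Nat.choose (n+1) k) + 1/(Nat.choose (n+1) (k+1))
      = ((n:ℝ)+2) / (((n:ℝ)+1) * Nat.choose n k) := by
  have hc1 := choose_ne0 (n+1) k (by omega)
  have hc2 := choose_ne0 (n+1) (k+1) (by omega)
  have hc3 := choose_ne0 n k h
  have hb : ((n:ℝ)+2) * Nat.choose (n+1) k * Nat.choose (n+1) (k+1)
      = ((n:ℝ)+1) * Nat.choose n k * Nat.choose (n+2) (k+1) := by
    exact_mod_cast congrArg (Nat.cast : ℕ → ℝ) (Bnat n k)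
  have hpascal : (Nat.choose (n+2) (k+1) : ℝ) = Nat.choose (n+1) k + Nat.choose (n+1) (k+1) := by
    rw [Nat.choose_succ_succ (n+1) k]; push_cast; ring
  rw [hpascal] at hb
  have hn1 : ((n:ℝ)+1) ≠ 0 := by positivity
  field_simp
  nlinarith [hb]

lemma L1 (c1 c2 : ℕ) (h : c2 ≤ c1) : ∀ c3 : ℕ,
    ∑ i ∈ range (c3+1), (Nat.choose c3 i : ℝ) / Nat.choose (c3+c1) (i+c2)
      = ((c3:ℝ)+c1+1) / (((c1:ℝ)+1) * Nat.choose c1 c2) := by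
  intro c3
  induction c3 with
  | zero =>
      have hc := choose_ne0 c1 c2 h
      have h1 : ((c1:ℝ)+1) ≠ 0 := by positivity
      simp only [zero_add, range_one, sum_singleton, Nat.choose_self, Nat.cast_one,
        Nat.cast_zero]
      field_simp
  | succ c3 ih =>
      set N := c3 + c1 with hN
      have hN1 : ((N:ℝ)+1) ≠ 0 := by positivity
      set g : ℕ → ℝ := fun j => (Nat.choose (N+1) (j+c2) : ℝ) with hg
      have key : ∀ i ∈ range (c3+1),
          (Nat.choose c3 i : ℝ) / g i + (Nat.choose c3 i : ℝ) / g (i+1)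
            = ((N:ℝ)+2)/((N:ℝ)+1) * ((Nat.choose c3 i : ℝ) / Nat.choose N (i+c2)) := by
        intro i hi
        rw [mem_range] at hi
        have hle : i + c2 ≤ N := by omega
        have hB := Breal N (i+c2) hle
        have hc := choose_ne0 N (i+c2) hle
        have hc1 := choose_ne0 (N+1) (i+c2) (by omega)
        have hc2 := choose_ne0 (N+1) (i+c2+1) (by omega)
        simp only [hg]
        rw [show i + 1 + c2 = i + c2 + 1 from by omega]
        field_simp at hB ⊢
        nlinarith [hB]
      have top : ∑ i ∈ range (c3+2), (Nat.choose c3 i : ℝ) / g i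
          = ∑ i ∈ range (c3+1), (Nat.choose c3 i : ℝ) / g i := by
        rw [Finset.sum_range_succ]
        simp [Nat.choose_eq_zero_of_lt (by omega : c3 < c3+1)]
      have shift : (∑ i ∈ range (c3+1), (Nat.choose c3 (i+1) : ℝ) / g (i+1))
            + (1:ℝ) / g 0
            = ∑ i ∈ range (c3+1), (Nat.choose c3 i : ℝ) / g i := by
        rw [← top, Finset.sum_range_succ' (fun i => (Nat.choose c3 i : ℝ) / g i) (c3+1)]
        simp only [Nat.choose_zero_right, Nat.cast_one]
      have expand : ∑ i ∈ range (c3+2), (Nat.choose (c3+1) i : ℝ) / Nat.choose (c3+1+c1) (i+c2)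
          = ∑ i ∈ range (c3+1),
              ((Nat.choose c3 i : ℝ) / g i + (Nat.choose c3 i : ℝ) / g (i+1)) := by
        have e1 : c3 + 1 + c1 = N + 1 := by omega
        have step1 : ∑ i ∈ range (c3+2), (Nat.choose (c3+1) i : ℝ) / Nat.choose (c3+1+c1) (i+c2)
            = (∑ i ∈ range (c3+1), (Nat.choose (c3+1) (i+1) : ℝ) / g (i+1)) + 1 / g 0 := by
          rw [e1, Finset.sum_range_succ' (fun i => (Nat.choose (c3+1) i : ℝ) / g i) (c3+1)]
          simp only [Nat.choose_zero_right, Nat.cast_one]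
        have step2 : (∑ i ∈ range (c3+1), (Nat.choose (c3+1) (i+1) : ℝ) / g (i+1))
            = (∑ i ∈ range (c3+1), (Nat.choose c3 i : ℝ) / g (i+1))
              + (∑ i ∈ range (c3+1), (Nat.choose c3 (i+1) : ℝ) / g (i+1)) := by
          rw [← Finset.sum_add_distrib]
          refine Finset.sum_congr rfl fun i _ => ?_
          rw [Nat.choose_succ_succ]
          push_cast
          rw [add_div]
        have step3 := Finset.sum_add_distrib (s := range (c3+1))
          (f := fun i => (Nat.choose c3 i : ℝ) / g i)
          (g := fun i => (Nat.choose c3 i : ℝ) / g (i+1))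
        rw [step1, step2, step3]
        linarith [shift]
      rw [show c3 + 1 + 1 = c3 + 2 from rfl]
      rw [show (∑ i ∈ range (c3+2), (Nat.choose (c3+1) i : ℝ) / Nat.choose (c3+1+c1) (i+c2))
          = _ from expand, Finset.sum_congr rfl key, ← Finset.mul_sum, ih]
      have hc := choose_ne0 c1 c2 h
      have h1 : ((c1:ℝ)+1) ≠ 0 := by positivity
      have hNc : ((N:ℝ)) = (c3:ℝ) + c1 := by simp [hN]
      rw [hNc]
      push_cast
      field_simp
      ring

lemma vand (m : ℕ) : Nat.choose (2*m) m = ∑ a ∈ range (m+1), Nat.choose m a * Nat.choose m a := by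
  rw [two_mul, Nat.add_choose_eq, Finset.Nat.sum_antidiagonal_eq_sum_range_succ_mk]
  refine Finset.sum_congr rfl fun i hi => ?_
  rw [mem_range] at hi
  rw [Nat.choose_symm (by omega : i ≤ m)]

/-- For even `m ≤ n` and `|S| = m`, the squared `L²(π)` norm of
`f_S(x) = (-1)^{|x_S|} C(m,|x_S|)` equals `C(2m, m)/(m+1)`; in particular it is
independent of `n` and of `S`. -/
theorem fS_norm (n m : ℕ) (hm : Even m) (hmn : m ≤ n)
    (S : Finset (Fin n)) (hS : S.card = m) :
    ∑ x : Fin n → Bool,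
        fS S m x ^ 2 / (((n : ℝ) + 1) * (Nat.choose n (ones x) : ℝ)) =
      (Nat.choose (2 * m) m : ℝ) / ((m : ℝ) + 1) := by
  classical
  set G : Finset (Fin n) → ℝ := fun A =>
    (Nat.choose m ((S ∩ A).card) : ℝ)^2 / (((n:ℝ)+1) * Nat.choose n A.card) with hG
  -- Step 1: reindex the sum over x by subsets A
  have step1 : ∑ x : Fin n → Bool,
      fS S m x ^ 2 / (((n : ℝ) + 1) * (Nat.choose n (ones x) : ℝ))
      = ∑ A : Finset (Fin n), G A := by
    apply Fintype.sum_bijective (fun x : Fin n → Bool => univ.filter (fun i => x i = true))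
    · rw [Function.bijective_iff_has_inverse]
      refine ⟨fun A => fun i => decide (i ∈ A), fun x => ?_, fun A => ?_⟩
      · funext i; simp
      · ext i; simp
    · intro x
      have h1 : ones x = (univ.filter (fun i => x i = true)).card := rfl
      have h2 : onesIn S x = (S ∩ univ.filter (fun i => x i = true)).card := by
        rw [onesIn]
        congr 1
        ext i
        simp
      have h3 : fS S m x ^ 2 = (Nat.choose m (onesIn S x) : ℝ)^2 := by
        rw [fS, mul_pow, ← pow_mul, mul_comm (onesIn S x) 2, pow_mul, neg_one_sq, one_pow, one_mul]
      rw [hG]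
      simp only [h3, ← h2, ← h1]
  rw [step1]
  -- Step 2: reindex subsets A by pairs (A ∩ S, A ∩ Sᶜ)
  have step2 : ∑ A : Finset (Fin n), G A
      = ∑ p ∈ S.powerset ×ˢ Sᶜ.powerset,
          (Nat.choose m p.1.card : ℝ)^2 / (((n:ℝ)+1) * Nat.choose n (p.1.card + p.2.card)) := by
    apply Finset.sum_nbij' (fun A => (A ∩ S, A ∩ Sᶜ)) (fun p => p.1 ∪ p.2)
    · intro A _
      simp only [mem_product, mem_powerset]
      exact ⟨inter_subset_right, inter_subset_right⟩
    · intro p _; exact mem_univ _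
    · intro A _
      simp only
      rw [← Finset.inter_union_distrib_left, Finset.union_compl, Finset.inter_univ]
    · intro p hp
      simp only [mem_product, mem_powerset] at hp
      obtain ⟨h1, h2⟩ := hp
      have e1 : (p.1 ∪ p.2) ∩ S = p.1 := by
        ext a
        simp only [mem_inter, mem_union]
        constructor
        · rintro ⟨h | h, hs⟩
          · exact h
          · exact absurd hs (Finset.mem_compl.mp (h2 h))
        · intro h; exact ⟨Or.inl h, h1 h⟩
      have e2 : (p.1 ∪ p.2) ∩ Sᶜ = p.2 := by
        ext a
        simp only [mem_inter, mem_union]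
        constructor
        · rintro ⟨h | h, hs⟩
          · exact absurd (Finset.mem_compl.mp hs) (fun hn => hn (h1 h))
          · exact h
        · intro h; exact ⟨Or.inr h, h2 h⟩
      exact Prod.ext e1 e2
    · intro A _
      have hd : Disjoint (A ∩ S) (A ∩ Sᶜ) :=
        Finset.disjoint_left.mpr fun a ha hb =>
          (Finset.mem_compl.mp (Finset.mem_of_mem_inter_right hb))
            (Finset.mem_of_mem_inter_right ha)
      have c2 : A.card = (A ∩ S).card + (A ∩ Sᶜ).card := by
        rw [← Finset.card_union_of_disjoint hd, ← Finset.inter_union_distrib_left,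
          Finset.union_compl, Finset.inter_univ]
      simp only [hG]
      rw [Finset.inter_comm S A, c2]
  rw [step2, Finset.sum_product]
  have hn1 : ((n:ℝ)+1) ≠ 0 := by positivity
  have hm1 : ((m:ℝ)+1) ≠ 0 := by positivity
  have hSc : Sᶜ.card = n - m := by
    rw [Finset.card_compl, hS, Fintype.card_fin]
  -- inner sums
  have inner : ∀ T ∈ S.powerset,
      (∑ U ∈ Sᶜ.powerset,
        (Nat.choose m T.card : ℝ)^2 / (((n:ℝ)+1) * Nat.choose n (T.card + U.card)))
      = (Nat.choose m T.card : ℝ) / ((m:ℝ)+1) := by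
    intro T hT
    have ha : T.card ≤ m := hS ▸ Finset.card_le_card (Finset.mem_powerset.mp hT)
    set a := T.card with haa
    have h1 := Finset.sum_powerset_apply_card
      (f := fun b => (Nat.choose m a : ℝ)^2 / (((n:ℝ)+1) * Nat.choose n (a + b))) (x := Sᶜ)
    rw [h1, hSc]
    have h2 : ∀ b ∈ range (n-m+1),
        (Nat.choose (n-m) b) • ((Nat.choose m a : ℝ)^2 / (((n:ℝ)+1) * Nat.choose n (a + b)))
        = (Nat.choose m a : ℝ)^2/((n:ℝ)+1)
            * ((Nat.choose (n-m) b : ℝ) / Nat.choose ((n-m)+m) (b+a)) := by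
      intro b hb
      rw [mem_range] at hb
      have e1 : (n-m)+m = n := Nat.sub_add_cancel hmn
      have e2 : b + a = a + b := Nat.add_comm b a
      have hcn := choose_ne0 n (a+b) (by omega)
      rw [e1, e2, nsmul_eq_mul]
      field_simp
    rw [Finset.sum_congr rfl h2, ← Finset.mul_sum, L1 m a ha (n-m)]
    have hc := choose_ne0 m a ha
    have e3 : ((n-m : ℕ) : ℝ) = (n:ℝ) - m := by
      rw [Nat.cast_sub hmn]
    rw [e3]
    field_simp
    ring
  rw [Finset.sum_congr rfl inner]
  -- outer sum
  have h3 := Finset.sum_powerset_apply_card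
    (f := fun a => (Nat.choose m a : ℝ) / ((m:ℝ)+1)) (x := S)
  rw [h3, hS]
  have hv : (Nat.choose (2*m) m : ℝ)
      = ∑ a ∈ range (m+1), (Nat.choose m a : ℝ) * (Nat.choose m a : ℝ) := by
    exact_mod_cast congrArg (Nat.cast : ℕ → ℝ) (vand m)
  rw [hv, Finset.sum_div]
  refine Finset.sum_congr rfl fun a _ => ?_
  rw [nsmul_eq_mul]
  ring
end
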